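/- arXiv:1405.0191 — 2 statements merged into one kernel-verified Lean document; each statement's English description precedes it below -/
import Mathlib

section
/- There exists a separable metrizable space X that has the perfect set property for open subsets but not the perfect set property for closed subsets. Concretely, if B is a Bernstein set in [0,1], then X = (B × {1}) ∪ ([0,1] × [0,1)) ⊆ [0,1]² has PSP(open) but not PSP(closed). -/
/-- `K` is a homeomorphic copy of the Cantor set `2^ω`. -/
def IsCantorCopy {T : Type} [TopologicalSpace T] (K : Set T) : Prop :=
  ∃ f : (ℕ → Bool) → T, Continuous f ∧ Function.Injective f ∧ Set.range f = K

/-- `A` contains a homeomorphic copy of the Cantor set `2^ω`. -/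
def ContainsCantorCopy {T : Type} [TopologicalSpace T] (A : Set T) : Prop :=
  ∃ K ⊆ A, IsCantorCopy K

/-- `B` is a Bernstein set in the subspace `S`: it meets, and its complement in `S` meets,
every copy of `2^ω` contained in `S`. -/
def BernsteinIn {T : Type} [TopologicalSpace T] (S B : Set T) : Prop :=
  B ⊆ S ∧ ∀ K : Set T, IsCantorCopy K → K ⊆ S → (B ∩ K).Nonempty ∧ ((S \ B) ∩ K).Nonempty

/-- `X` has the perfect set property for (relatively) open subsets. -/
def PSPopen {T : Type} [TopologicalSpace T] (X : Set T) : Prop :=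
  ∀ U : Set T, IsOpen U → ¬ (U ∩ X).Countable → ContainsCantorCopy (U ∩ X)

/-- `X` has the perfect set property for (relatively) closed subsets. -/
def PSPclosed {T : Type} [TopologicalSpace T] (X : Set T) : Prop :=
  ∀ C : Set T, IsClosed C → ¬ (C ∩ X).Countable → ContainsCantorCopy (C ∩ X)

open Set Function

lemma aux_nat_bool_uncountable : ¬ Countable (ℕ → Bool) := by
  intro h
  have h1 : Cardinal.mk (ℕ → Bool) ≤ Cardinal.aleph0 := Cardinal.mk_le_aleph0
  simp only [Cardinal.mk_arrow, Cardinal.mk_bool, Cardinal.lift_id, Cardinal.mk_nat,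
    Cardinal.two_power_aleph0] at h1
  exact absurd h1 (not_le.mpr Cardinal.aleph0_lt_continuum)

lemma aux_icc_uncountable : ¬ (Set.Icc (0:ℝ) 1).Countable := by
  intro h
  have h2 := Cardinal.mk_Icc_real (a:=(0:ℝ)) (b:=1) (by norm_num)
  have := h.to_subtype
  have h1 : Cardinal.mk ↑(Icc (0:ℝ) 1) ≤ Cardinal.aleph0 := Cardinal.mk_le_aleph0
  rw [h2] at h1
  exact absurd h1 (not_le.mpr Cardinal.aleph0_lt_continuum)

lemma aux_cantorEmb : ∃ h : (ℕ → Bool) → ℝ,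
    Continuous h ∧ Injective h ∧ range h ⊆ Icc 0 1 := by
  obtain ⟨f, hr, hc, hi⟩ :=
    (isClosed_Icc (a:=(0:ℝ)) (b:=1)).exists_nat_bool_injection_of_not_countable
      aux_icc_uncountable
  exact ⟨f, hc, hi, hr⟩

lemma aux_contains_mono {A A' : Set (ℝ × ℝ)} (h : A ⊆ A')
    (hA : ContainsCantorCopy A) : ContainsCantorCopy A' := by
  obtain ⟨K, hK, hcc⟩ := hA
  exact ⟨K, hK.trans h, hcc⟩

lemma aux_seg_copy (φ : ℝ → ℝ × ℝ) (hφc : Continuous φ) (hφi : Injective φ)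
    {a c : ℝ} (hac : a < c) : ContainsCantorCopy (φ '' Icc a c) := by
  obtain ⟨h, hhc, hhi, hhr⟩ := aux_cantorEmb
  refine ⟨range (fun x => φ (a + (c - a) * h x)), ?_,
    fun x => φ (a + (c - a) * h x), hφc.comp (by continuity), ?_, rfl⟩
  · rintro _ ⟨x, rfl⟩
    have hx := hhr (mem_range_self x)
    exact ⟨a + (c - a) * h x, ⟨by nlinarith [hx.1], by nlinarith [hx.2]⟩, rfl⟩
  · intro x y hxy
    have h1 := hφi hxy
    have h2 : (c - a) * h x = (c - a) * h y := by linarith [add_left_cancel h1]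
    exact hhi (mul_left_cancel₀ (by linarith : c - a ≠ 0) h2)

lemma aux_bernstein_uncountable {B : Set ℝ} (hB : BernsteinIn (Set.Icc (0:ℝ) 1) B) :
    ¬ B.Countable := by
  intro hcnt
  obtain ⟨h, hhc, hhi, hhr⟩ := aux_cantorEmb
  set mix : (ℕ → Bool) → (ℕ → Bool) → ℕ → Bool :=
    fun x y n => if Even n then x (n / 2) else y (n / 2) with hmix
  have hmixinj : ∀ x x' y y', mix x y = mix x' y' → x = x' := by
    intro x x' y y' hxy
    funext n
    have := congrFun hxy (2 * n)
    simpa [hmix, even_two_mul, Nat.mul_div_cancel_left n (by norm_num : 0 < 2)] using this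
  have hmem : ∀ x : ℕ → Bool, ∃ b ∈ B, ∃ y, h (mix x y) = b := by
    intro x
    have hcont : Continuous (fun y => h (mix x y)) := by
      apply hhc.comp
      apply continuous_pi
      intro n
      by_cases hn : Even n
      · simpa [hmix, hn] using continuous_const
      · simpa [hmix, hn] using continuous_apply (n / 2)
    have hinj : Injective (fun y => h (mix x y)) := by
      intro y y' hyy'
      have heq : mix x y = mix x y' := hhi hyy'
      funext n
      have := congrFun heq (2 * n + 1)
      have hodd : ¬ Even (2 * n + 1) := by rw [Nat.even_iff]; omega
      have hdiv : (2 * n + 1) / 2 = n := by omega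
      simpa [hmix, hodd, hdiv] using this
    have hK : IsCantorCopy (range (fun y => h (mix x y))) := ⟨_, hcont, hinj, rfl⟩
    obtain ⟨b, hbB, hbK⟩ := (hB.2 _ hK (by rintro _ ⟨y, rfl⟩; exact hhr (mem_range_self _))).1
    obtain ⟨y, hy⟩ := hbK
    exact ⟨b, hbB, y, hy⟩
  choose b hbB y hy using hmem
  have hinj : Injective b := by
    intro x x' hxx'
    have heq : h (mix x (y x)) = h (mix x' (y x')) := by rw [hy, hy, hxx']
    exact hmixinj _ _ _ _ (hhi heq)
  have hsub : range b ⊆ B := by rintro _ ⟨x, rfl⟩; exact hbB x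
  have : Countable (ℕ → Bool) := by
    have := (hcnt.mono hsub).to_subtype
    exact (Equiv.ofInjective b hinj).countable_iff.mpr this
  exact aux_nat_bool_uncountable this

theorem psp_open_not_psp_closed :
    ∀ B : Set ℝ, BernsteinIn (Set.Icc (0:ℝ) 1) B →
      PSPopen ((B ×ˢ ({1} : Set ℝ)) ∪ (Set.Icc (0:ℝ) 1 ×ˢ Set.Ico (0:ℝ) 1)) ∧
      ¬ PSPclosed ((B ×ˢ ({1} : Set ℝ)) ∪ (Set.Icc (0:ℝ) 1 ×ˢ Set.Ico (0:ℝ) 1)) := by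
  intro B hB
  set X : Set (ℝ × ℝ) := (B ×ˢ ({1} : Set ℝ)) ∪ (Set.Icc (0:ℝ) 1 ×ˢ Set.Ico (0:ℝ) 1) with hX
  constructor
  · -- PSPopen
    intro U hU hUc
    have hne : (U ∩ X).Nonempty := by
      rcases (U ∩ X).eq_empty_or_nonempty with he | hne
      · exact absurd (he ▸ countable_empty) hUc
      · exact hne
    obtain ⟨p, hpU, hpX⟩ := hne
    obtain ⟨ε, hε, hball⟩ := Metric.isOpen_iff.mp hU p hpU
    set δ : ℝ := min ε 1 with hδdef
    have hδ : 0 < δ := lt_min hε one_pos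
    have hδ1 : δ ≤ 1 := min_le_right _ _
    have hδε : δ ≤ ε := min_le_left _ _
    rcases hpX with hp | hp
    · -- p ∈ B × {1}
      have hp2 : p.2 = 1 := hp.2
      have hp1 : p.1 ∈ Icc (0:ℝ) 1 := hB.1 hp.1
      have key : ContainsCantorCopy ((fun t => (p.1, t)) '' Icc (1 - δ/2) (1 - δ/3)) :=
        aux_seg_copy _ (Continuous.prodMk_right p.1)
          (fun t t' htt' => (Prod.mk.injEq _ _ _ _ ▸ htt').2) (by linarith)
      refine aux_contains_mono ?_ key
      rintro _ ⟨t, ⟨ht1, ht2⟩, rfl⟩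
      constructor
      · apply hball
        rw [Metric.mem_ball, Prod.dist_eq]
        have : dist t p.2 < ε := by
          rw [hp2, Real.dist_eq, abs_of_nonpos (by linarith)]
          linarith
        simpa [Real.dist_eq] using this
      · exact Or.inr ⟨hp1, by constructor <;> [linarith; linarith]⟩
    · -- p ∈ Icc × Ico
      have hp1 : p.1 ∈ Icc (0:ℝ) 1 := hp.1
      have hp2 : p.2 ∈ Ico (0:ℝ) 1 := hp.2
      have hac : max 0 (p.1 - δ/2) < min 1 (p.1 + δ/2) := by
        apply max_lt <;> apply lt_min
        · norm_num
        · linarith [hp1.1]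
        · linarith [hp1.2]
        · linarith
      have key : ContainsCantorCopy
          ((fun t => (t, p.2)) '' Icc (max 0 (p.1 - δ/2)) (min 1 (p.1 + δ/2))) :=
        aux_seg_copy _ (continuous_id.prodMk continuous_const)
          (fun t t' htt' => (Prod.mk.injEq _ _ _ _ ▸ htt').1) hac
      refine aux_contains_mono ?_ key
      rintro _ ⟨t, ⟨ht1, ht2⟩, rfl⟩
      have h0 : (0:ℝ) ≤ t := le_trans (le_max_left _ _) ht1
      have h1 : t ≤ 1 := le_trans ht2 (min_le_left _ _)
      have hl : p.1 - δ/2 ≤ t := le_trans (le_max_right _ _) ht1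
      have hr : t ≤ p.1 + δ/2 := le_trans ht2 (min_le_right _ _)
      constructor
      · apply hball
        rw [Metric.mem_ball, Prod.dist_eq]
        have : dist t p.1 < ε := by
          rw [Real.dist_eq, abs_lt]; constructor <;> linarith
        simpa [Real.dist_eq] using this
      · exact Or.inr ⟨⟨h0, h1⟩, hp2⟩
  · -- ¬ PSPclosed
    intro hP
    have hCclosed : IsClosed {q : ℝ × ℝ | q.2 = 1} :=
      isClosed_eq continuous_snd continuous_const
    have hCX : {q : ℝ × ℝ | q.2 = 1} ∩ X = B ×ˢ ({1} : Set ℝ) := by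
      ext q
      simp only [hX, mem_inter_iff, mem_setOf_eq, mem_union, mem_prod, mem_singleton_iff,
        mem_Icc, mem_Ico]
      constructor
      · rintro ⟨h2, hq | hq⟩
        · exact hq
        · exact absurd h2 (by linarith [hq.2.2] : q.2 ≠ 1)
      · rintro ⟨hq1, hq2⟩
        exact ⟨hq2, Or.inl ⟨hq1, hq2⟩⟩
    have hBnc : ¬ (B ×ˢ ({1} : Set ℝ)).Countable := by
      intro h
      apply aux_bernstein_uncountable hB
      have : B ⊆ Prod.fst '' (B ×ˢ ({1} : Set ℝ)) := by
        intro x hx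
        exact ⟨(x, 1), ⟨hx, rfl⟩, rfl⟩
      exact (h.image Prod.fst).mono this
    obtain ⟨K, hKsub, f, hfc, hfi, hfr⟩ := hP _ hCclosed (by rw [hCX]; exact hBnc)
    rw [hCX] at hKsub
    set g : (ℕ → Bool) → ℝ := fun x => (f x).1 with hg
    have hfmem : ∀ x, f x ∈ B ×ˢ ({1} : Set ℝ) := fun x => hKsub (hfr ▸ mem_range_self x)
    have hgB : ∀ x, g x ∈ B := fun x => (hfmem x).1
    have hginj : Injective g := by
      intro x x' hxx'
      apply hfi
      have h2 : (f x).2 = (f x').2 := by rw [(hfmem x).2, (hfmem x').2]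
      exact Prod.ext hxx' h2
    have hKcc : IsCantorCopy (range g) := ⟨g, (continuous_fst.comp hfc), hginj, rfl⟩
    obtain ⟨t, ⟨htI, htB⟩, ht⟩ := (hB.2 (range g) hKcc
      (by rintro _ ⟨x, rfl⟩; exact hB.1 (hgB x))).2
    obtain ⟨x, rfl⟩ := ht
    exact htB (hgB x)
end

section
/- There exists a separable metrizable space X that has the perfect set property for clopen subsets but not for open subsets. Concretely, if B is a Bernstein set in [0,1] × [0,1), then X = B ∪ ([0,1] × {1}) ⊆ [0,1]² is connected (hence has only trivial clopen subsets), contains a copy of 2^ω, and B is an uncountable open subset of X containing no copy of 2^ω. -/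
/-- `X` has the perfect set property for (relatively) clopen subsets. -/
def PSPclopen {T : Type} [TopologicalSpace T] (X : Set T) : Prop :=
  ∀ A : Set T, (∃ U : Set T, IsOpen U ∧ A = U ∩ X) → (∃ C : Set T, IsClosed C ∧ A = C ∩ X) →
    ¬ A.Countable → ContainsCantorCopy A

/-!
A Bernstein set `B` in `S = [0,1] × [0,1)` meets every uncountable closed subset of `S`, so for
any open cover `u ∪ v` of `X = B ∪ ([0,1] × {1})` the closed set `[0,1]² \ (u ∪ v)`, which lies in
`S` and misses `B`, is countable. The square minus a countable set is still connected, and `X` is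
dense in the square, so `u` and `v` meet inside `X`: thus `X` is connected, its only nonempty
clopen subset is `X` itself, and the top edge supplies a Cantor set in it. On the other hand `B`
is relatively open in `X`, uncountable (it meets each horizontal segment of `S`) and contains no
Cantor set.
-/

open Set Real

section CantorCopies

variable {T : Type} [TopologicalSpace T]

theorem ContainsCantorCopy.mono {A A' : Set T} (h : ContainsCantorCopy A) (hAA' : A ⊆ A') :
    ContainsCantorCopy A' :=
  let ⟨K, hKA, hK⟩ := h
  ⟨K, hKA.trans hAA', hK⟩

theorem IsClosed.containsCantorCopy [PolishSpace T] {C : Set T} (hC : IsClosed C)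
    (hunc : ¬C.Countable) : ContainsCantorCopy C :=
  let ⟨f, hfC, hf, hfi⟩ := hC.exists_nat_bool_injection_of_not_countable hunc
  ⟨range f, hfC, f, hf, hfi, rfl⟩

theorem BernsteinIn.not_containsCantorCopy {S B : Set T} (hB : BernsteinIn S B) :
    ¬ContainsCantorCopy B := by
  rintro ⟨K, hKB, hK⟩
  obtain ⟨x, hxB, hxK⟩ := (hB.2 K hK (hKB.trans hB.1)).2
  exact hxB.2 (hKB hxK)

theorem BernsteinIn.inter_nonempty_of_isClosed [PolishSpace T] {S B C : Set T}
    (hB : BernsteinIn S B) (hC : IsClosed C) (hCS : C ⊆ S) (hunc : ¬C.Countable) :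
    (B ∩ C).Nonempty :=
  let ⟨K, hKC, hK⟩ := hC.containsCantorCopy hunc
  (hB.2 K hK (hKC.trans hCS)).1.mono (inter_subset_inter_right B hKC)

theorem IsPreconnected.pspClopen {X : Set T} (hX : IsPreconnected X)
    (hXK : ContainsCantorCopy X) : PSPclopen X := by
  rintro A ⟨U, hU, rfl⟩ ⟨C, hC, hAC⟩ hunc
  have hcover : X ⊆ U ∪ Cᶜ := fun x hx => (em (x ∈ C)).imp
    (fun hxC => (hAC ▸ ⟨hxC, hx⟩ : x ∈ U ∩ X).1) id
  have hdisj : X ∩ (U ∩ Cᶜ) = ∅ := eq_empty_of_forall_notMem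
    fun x ⟨hx, hxU, hxC⟩ => hxC (hAC ▸ ⟨hxU, hx⟩ : x ∈ C ∩ X).1
  rcases isPreconnected_iff_subset_of_disjoint.1 hX U Cᶜ hU hC.isOpen_compl hcover hdisj
    with hXU | hXC
  · rwa [inter_eq_right.2 hXU]
  · refine absurd (countable_empty.mono fun x hx => ?_) hunc
    exact hXC hx.2 (hAC ▸ hx : x ∈ C ∩ X).1

end CantorCopies

section Uncountable

variable {E : Type*} [AddCommGroup E] [Module ℝ E] [Nontrivial E] [TopologicalSpace E]
  [ContinuousAdd E] [ContinuousSMul ℝ E]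

theorem IsOpen.not_countable_of_nonempty {U : Set E} (hU : IsOpen U) (hne : U.Nonempty) :
    ¬U.Countable := fun hc =>
  let ⟨_, hxU, hx⟩ := (hc.dense_compl ℝ).inter_open_nonempty U hU hne
  hx hxU

theorem not_countable_Icc_of_lt {a b : ℝ} (h : a < b) : ¬(Icc a b).Countable := fun hc =>
  isOpen_Ioo.not_countable_of_nonempty (nonempty_Ioo.2 h) (hc.mono Ioo_subset_Icc_self)

theorem not_countable_Ico_of_lt {a b : ℝ} (h : a < b) : ¬(Ico a b).Countable := fun hc =>
  isOpen_Ioo.not_countable_of_nonempty (nonempty_Ioo.2 h) (hc.mono Ioo_subset_Ico_self)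

theorem not_countable_prod_singleton {α β : Type*} {s : Set α} (hs : ¬s.Countable) (b : β) :
    ¬(s ×ˢ {b}).Countable := fun h =>
  hs (fst_image_prod s (singleton_nonempty b) ▸ h.image Prod.fst)

end Uncountable

section Connectedness

theorem isPreconnected_of_subset_closure_of_countable_gaps {T : Type*} [TopologicalSpace T]
    {X Y : Set T} (hY : ∀ K : Set T, K.Countable → IsPreconnected (Y \ K)) (hXY : X ⊆ Y)
    (hYX : Y ⊆ closure X)
    (hgap : ∀ F : Set T, IsClosed F → Disjoint F X → (F ∩ Y).Countable) :
    IsPreconnected X := by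
  intro u v hu hv hXuv ⟨p, hpX, hpu⟩ ⟨q, hqX, hqv⟩
  have hgap_uv := hgap _ (hu.union hv).isClosed_compl (disjoint_compl_left_iff_subset.2 hXuv)
  have hcover : Y \ ((u ∪ v)ᶜ ∩ Y) ⊆ u ∪ v := fun y ⟨hyY, hy⟩ =>
    by_contra fun h => hy ⟨h, hyY⟩
  obtain ⟨z, ⟨hzY, -⟩, hzu, hzv⟩ := hY _ hgap_uv u v hu hv hcover
    ⟨p, ⟨hXY hpX, fun h => h.1 (hXuv hpX)⟩, hpu⟩
    ⟨q, ⟨hXY hqX, fun h => h.1 (hXuv hqX)⟩, hqv⟩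
  obtain ⟨x, ⟨hxu, hxv⟩, hxX⟩ := mem_closure_iff.1 (hYX hzY) _ (hu.inter hv) ⟨hzu, hzv⟩
  exact ⟨x, hxX, hxu, hxv⟩

variable {E : Type*} [AddCommGroup E] [Module ℝ E] [TopologicalSpace E]
  [ContinuousAdd E] [ContinuousSMul ℝ E]

theorem isPathConnected_range_diff_countable (hE : 1 < Module.rank ℝ E) {α : Type*}
    [TopologicalSpace α] {f : E → α} (hf : Continuous f) (hinj : f.Injective) {K : Set α}
    (hK : K.Countable) : IsPathConnected (range f \ K) :=
  image_compl_preimage (f := f) ▸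
    ((hK.preimage hinj).isPathConnected_compl_of_one_lt_rank hE).image hf

theorem IsPreconnected.diff_countable_of_subset_closure [Nontrivial E] {U Y K : Set E}
    (hU : IsOpen U) (hUY : U ⊆ Y) (hYU : Y ⊆ closure U) (hK : K.Countable)
    (hUK : IsPreconnected (U \ K)) : IsPreconnected (Y \ K) :=
  hUK.subset_closure (sdiff_subset_sdiff_left hUY) fun _ hy => closure_minimal
    ((hK.dense_compl ℝ).open_subset_closure_inter hU) isClosed_closure (hYU hy.1)

end Connectedness

theorem isPreconnected_unitSquare_diff_countable {K : Set (ℝ × ℝ)} (hK : K.Countable) :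
    IsPreconnected ((Icc 0 1 ×ˢ Icc 0 1) \ K) := by
  have hrange : range (Prod.map sigmoid sigmoid) = Ioo 0 1 ×ˢ Ioo 0 1 := by
    rw [range_prodMap, range_sigmoid]
  have hrank : 1 < Module.rank ℝ (ℝ × ℝ) := by
    rw [rank_prod', Module.rank_self]
    norm_num
  refine IsPreconnected.diff_countable_of_subset_closure (isOpen_Ioo.prod isOpen_Ioo)
    (prod_mono Ioo_subset_Icc_self Ioo_subset_Icc_self)
    (by rw [closure_prod_eq, closure_Ioo zero_ne_one]) hK ?_
  rw [← hrange]
  exact (isPathConnected_range_diff_countable hrank (by fun_prop)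
    (sigmoid_injective.prodMap sigmoid_injective) hK).isConnected.isPreconnected

theorem BernsteinIn.subset_closure_of_isOpen {E : Type} [NormedAddCommGroup E]
    [NormedSpace ℝ E] [Nontrivial E] [CompleteSpace E] [SecondCountableTopology E]
    {S B U : Set E} (hB : BernsteinIn S B) (hU : IsOpen U) (hUS : U ⊆ S) : U ⊆ closure B := by
  intro x hxU
  refine mem_closure_iff.2 fun W hW hxW => ?_
  obtain ⟨r, hr, hball⟩ := Metric.isOpen_iff.1 (hW.inter hU) x ⟨hxW, hxU⟩
  have hsub : Metric.closedBall x (r / 2) ⊆ W ∩ U :=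
    (Metric.closedBall_subset_ball (half_lt_self hr)).trans hball
  have hunc : ¬(Metric.closedBall x (r / 2)).Countable := fun h =>
    Metric.isOpen_ball.not_countable_of_nonempty (Metric.nonempty_ball.2 (half_pos hr))
      (h.mono Metric.ball_subset_closedBall)
  obtain ⟨b, hbB, hb⟩ :=
    hB.inter_nonempty_of_isClosed Metric.isClosed_closedBall
      (hsub.trans (inter_subset_right.trans hUS)) hunc
  exact ⟨b, (hsub hb).1, hbB⟩

theorem BernsteinIn.not_countable_of_prod {α β : Type} [TopologicalSpace α]
    [TopologicalSpace β] [PolishSpace α] [PolishSpace β] {s : Set α} {t : Set β}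
    {B : Set (α × β)} (hB : BernsteinIn (s ×ˢ t) B) (hs : IsClosed s) (hsc : ¬s.Countable)
    (htc : ¬t.Countable) : ¬B.Countable := by
  have ht : t ⊆ Prod.snd '' B := fun y hy =>
    let ⟨b, hbB, _, hby⟩ := hB.inter_nonempty_of_isClosed (hs.prod isClosed_singleton)
      (prod_mono subset_rfl (singleton_subset_iff.2 hy)) (not_countable_prod_singleton hsc y)
    ⟨b, hbB, hby⟩
  exact fun h => htc ((h.image Prod.snd).mono ht)

theorem BernsteinIn.isPreconnected_union_top {B : Set (ℝ × ℝ)}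
    (hB : BernsteinIn (Icc 0 1 ×ˢ Ico 0 1) B) : IsPreconnected (B ∪ Icc 0 1 ×ˢ {1}) := by
  have hsq : (Icc 0 1 ×ˢ Icc 0 1 : Set (ℝ × ℝ)) =
      Icc 0 1 ×ˢ Ico 0 1 ∪ Icc 0 1 ×ˢ {1} := by
    rw [← prod_union, Ico_union_right zero_le_one]
  refine isPreconnected_of_subset_closure_of_countable_gaps
    (hsq ▸ fun K hK => isPreconnected_unitSquare_diff_countable hK)
    (union_subset_union_left _ hB.1) ?_ fun F hF hFX => ?_
  · calc Icc 0 1 ×ˢ Ico 0 1 ∪ Icc 0 1 ×ˢ {1} = closure (Ioo (0 : ℝ) 1 ×ˢ Ioo 0 1) := by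
          rw [← hsq, closure_prod_eq, closure_Ioo zero_ne_one]
      _ ⊆ closure B := closure_minimal
          (hB.subset_closure_of_isOpen (isOpen_Ioo.prod isOpen_Ioo)
            (prod_mono Ioo_subset_Icc_self Ioo_subset_Ico_self)) isClosed_closure
      _ ⊆ closure (B ∪ Icc 0 1 ×ˢ {1}) := closure_mono subset_union_left
  · have hFS : F ∩ (Icc 0 1 ×ˢ Ico 0 1 ∪ Icc 0 1 ×ˢ {1}) ⊆ Icc 0 1 ×ˢ Ico 0 1 :=
      fun p ⟨hpF, hp⟩ => hp.resolve_right fun htop => hFX.ne_of_mem hpF (Or.inr htop) rfl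
    by_contra hunc
    obtain ⟨b, hbB, hbF, -⟩ := hB.inter_nonempty_of_isClosed
      (hF.inter (hsq ▸ isClosed_Icc.prod isClosed_Icc)) hFS hunc
    exact hFX.ne_of_mem hbF (Or.inl hbB) rfl

theorem psp_clopen_not_psp_open :
    ∀ B : Set (ℝ × ℝ), BernsteinIn (Set.Icc (0:ℝ) 1 ×ˢ Set.Ico (0:ℝ) 1) B →
      IsConnected (B ∪ (Set.Icc (0:ℝ) 1 ×ˢ ({1} : Set ℝ))) ∧
      ContainsCantorCopy (B ∪ (Set.Icc (0:ℝ) 1 ×ˢ ({1} : Set ℝ))) ∧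
      ¬ B.Countable ∧
      (∃ U : Set (ℝ × ℝ), IsOpen U ∧ B = U ∩ (B ∪ (Set.Icc (0:ℝ) 1 ×ˢ ({1} : Set ℝ)))) ∧
      ¬ ContainsCantorCopy B ∧
      PSPclopen (B ∪ (Set.Icc (0:ℝ) 1 ×ˢ ({1} : Set ℝ))) ∧
      ¬ PSPopen (B ∪ (Set.Icc (0:ℝ) 1 ×ˢ ({1} : Set ℝ))) := by
  intro B hB
  have hconn : IsConnected (B ∪ Icc 0 1 ×ˢ {1}) :=
    ⟨⟨(0, 1), Or.inr ⟨left_mem_Icc.2 zero_le_one, rfl⟩⟩, hB.isPreconnected_union_top⟩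
  have hcantor : ContainsCantorCopy (B ∪ Icc 0 1 ×ˢ {1}) :=
    ((isClosed_Icc.prod isClosed_singleton).containsCantorCopy
      (not_countable_prod_singleton (not_countable_Icc_of_lt one_pos) 1)).mono
      subset_union_right
  have hunc : ¬B.Countable := hB.not_countable_of_prod isClosed_Icc
    (not_countable_Icc_of_lt one_pos) (not_countable_Ico_of_lt one_pos)
  have hopen : ∃ U : Set (ℝ × ℝ), IsOpen U ∧ B = U ∩ (B ∪ Icc 0 1 ×ˢ {1}) := by
    refine ⟨{p | p.2 < 1}, isOpen_lt continuous_snd continuous_const, ?_⟩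
    ext p
    constructor
    · exact fun hp => ⟨(hB.1 hp).2.2, Or.inl hp⟩
    · rintro ⟨hp1, hp | ⟨-, hp2⟩⟩
      exacts [hp, absurd hp2 hp1.ne]
  refine ⟨hconn, hcantor, hunc, hopen, hB.not_containsCantorCopy,
    hconn.isPreconnected.pspClopen hcantor, fun hpsp => ?_⟩
  obtain ⟨U, hU, hBU⟩ := hopen
  exact hB.not_containsCantorCopy (hBU ▸ hpsp U hU (hBU ▸ hunc))
end
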